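/- Let N be a binary nearly stable network and T a binary phylogenetic tree on the same leaf set. Suppose N contains vertices w, u, g, v, e and leaves ℓ, ℓ' such that: w is a tree vertex with children u and g, both tree vertices; v and e are reticulations; the children of u are v and e; the children of g are e and v; the child of v is the leaf ℓ; and the child of e is the leaf ℓ'. Let N' be obtained from N by deleting the edges (u, e) and (g, v). If N displays T, then N' displays T. (Theorem 3(iii)) -/

import Mathlib

/-!
Common framework: a binary phylogenetic network is modelled as a directed graph
on an ambient type `V`, given by a vertex set `verts : Set V`, an adjacency
relation `adj : V → V → Prop` (no parallel edges are possible in this model),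
and a root vertex `root`.
-/

/-- The outdegree of a vertex `v`: the number of its out-neighbours. -/
noncomputable def outdeg {V : Type*} (adj : V → V → Prop) (v : V) : ℕ :=
  {u | adj v u}.ncard

/-- The indegree of a vertex `v`: the number of its in-neighbours. -/
noncomputable def indeg {V : Type*} (adj : V → V → Prop) (v : V) : ℕ :=
  {u | adj u v}.ncard

/-- A leaf of the network: a vertex with outdegree 0. -/
def IsLeaf {V : Type*} (verts : Set V) (adj : V → V → Prop) (v : V) : Prop :=
  v ∈ verts ∧ outdeg adj v = 0

/-- A tree vertex: indegree 1 and outdegree 2. -/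
def IsTreeVertex {V : Type*} (adj : V → V → Prop) (v : V) : Prop :=
  indeg adj v = 1 ∧ outdeg adj v = 2

/-- A reticulation: indegree 2 and outdegree 1. -/
def IsReticulation {V : Type*} (adj : V → V → Prop) (v : V) : Prop :=
  indeg adj v = 2 ∧ outdeg adj v = 1

/-- `l` is a directed path from `a` to `b`: a nonempty list of vertices starting
at `a`, ending at `b`, each consecutive pair joined by an edge. -/
def IsPathFromTo {V : Type*} (adj : V → V → Prop) (l : List V) (a b : V) : Prop :=
  l.Chain' adj ∧ l.head? = some a ∧ l.getLast? = some b

/-- A binary phylogenetic network: a finite DAG with a unique root (the only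
vertex of indegree 0) of outdegree 2, in which every vertex is reachable from
the root, every leaf has indegree 1, and every other non-root vertex is either
a tree vertex or a reticulation. -/
structure IsBinaryNetwork {V : Type*} (verts : Set V) (adj : V → V → Prop) (root : V) : Prop where
  finite_verts : verts.Finite
  root_mem : root ∈ verts
  adj_mem : ∀ ⦃u v : V⦄, adj u v → u ∈ verts ∧ v ∈ verts
  acyclic : ∀ v : V, ¬ Relation.TransGen adj v v
  root_indeg : indeg adj root = 0
  root_outdeg : outdeg adj root = 2
  root_unique : ∀ v ∈ verts, indeg adj v = 0 → v = root
  reach : ∀ v ∈ verts, Relation.ReflTransGen adj root v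
  leaf_indeg : ∀ v ∈ verts, outdeg adj v = 0 → indeg adj v = 1
  internal_deg : ∀ v ∈ verts, v ≠ root → outdeg adj v ≠ 0 →
      IsTreeVertex adj v ∨ IsReticulation adj v

/-- `x` is stable: there is a leaf `ℓ` such that `x` lies on every directed
path from the root to `ℓ`. -/
def Stable {V : Type*} (verts : Set V) (adj : V → V → Prop) (root x : V) : Prop :=
  ∃ ℓ, IsLeaf verts adj ℓ ∧ ∀ l : List V, IsPathFromTo adj l root ℓ → x ∈ l

/-- A network is reticulation-visible if every reticulation is stable. -/
def ReticulationVisible {V : Type*} (verts : Set V) (adj : V → V → Prop) (root : V) : Prop :=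
  ∀ v ∈ verts, IsReticulation adj v → Stable verts adj root v

/-- A network is nearly stable if every vertex is stable or all of its parents
are stable. -/
def NearlyStable {V : Type*} (verts : Set V) (adj : V → V → Prop) (root : V) : Prop :=
  ∀ v ∈ verts, Stable verts adj root v ∨ ∀ p : V, adj p v → Stable verts adj root p

/-- `M` (a DAG with vertex set `vertsM` and adjacency `adjM`) displays the
binary phylogenetic tree `T` (with vertex set `vertsT` and adjacency `adjT`,
whose leaf set equals that of `M`): there are an injective map `φ` from the
vertices of `T` into the vertices of `M` fixing every leaf, and for each edge
`(a, b)` of `T` a directed path `P a b` in `M` from `φ a` to `φ b`, such that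
two distinct such paths share no vertices other than common endpoints in the
image of `φ`, and no internal vertex of any path lies in the image of `φ`. -/
def Displays {V : Type*} (vertsM : Set V) (adjM : V → V → Prop)
    (vertsT : Set V) (adjT : V → V → Prop) : Prop :=
  ∃ (φ : V → V) (P : V → V → List V),
    Set.MapsTo φ vertsT vertsM ∧
    Set.InjOn φ vertsT ∧
    (∀ ℓ : V, IsLeaf vertsT adjT ℓ → φ ℓ = ℓ) ∧
    (∀ a b : V, adjT a b → IsPathFromTo adjM (P a b) (φ a) (φ b)) ∧
    (∀ a b : V, adjT a b → ∀ x ∈ (P a b).tail.dropLast, x ∉ φ '' vertsT) ∧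
    (∀ a b a' b' : V, adjT a b → adjT a' b' → (a, b) ≠ (a', b') →
      ∀ x : V, x ∈ P a b → x ∈ P a' b' →
        (x = φ a ∨ x = φ b) ∧ (x = φ a' ∨ x = φ b'))

/-!
Let `p` be the parent of `ℓ` in `T`. The path of the display into `ℓ` ends with `v, ℓ` and enters
`v` from `u` or `g`; so it either starts at `u` or `g`, or passes through `w`. A tree vertex mapped
to `u` or `g` has exactly the children `ℓ` and `ℓ'`, and two distinct paths can share `w` only as
a common endpoint. Hence `p` is also the parent of `ℓ'`, `φ p ∈ {w, u, g}`, the path of every edge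
not incident to `p` avoids `w, u, g, v, e, ℓ, ℓ'`, and the path into `p` reaches `w` before any
other of these vertices. Re-embedding `p` at `w` with the paths `w u v ℓ` and `w g e ℓ'`, and
cutting the path into `p` at `w`, gives a display that uses neither `(u, e)` nor `(g, v)`.
-/

namespace Set

variable {α : Type*} {s : Set α} {a b c : α}

theorem eq_of_mem_of_ncard_eq_one (h : s.ncard = 1) (ha : a ∈ s) (hb : b ∈ s) : a = b := by
  obtain ⟨x, rfl⟩ := ncard_eq_one.1 h
  rw [mem_singleton_iff] at ha hb
  rw [ha, hb]

theorem eq_or_eq_of_ncard_eq_two (h : s.ncard = 2) (hab : a ≠ b) (ha : a ∈ s) (hb : b ∈ s)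
    (hc : c ∈ s) : c = a ∨ c = b := by
  obtain ⟨x, y, -, rfl⟩ := ncard_eq_two.1 h
  simp only [mem_insert_iff, mem_singleton_iff] at ha hb hc
  grind

end Set

namespace IsPathFromTo

variable {V : Type*} {adj : V → V → Prop} {l : List V} {a b x : V}

theorem head_mem (h : IsPathFromTo adj l a b) : a ∈ l := List.mem_of_mem_head? h.2.1

theorem last_mem (h : IsPathFromTo adj l a b) : b ∈ l := List.mem_of_getLast? h.2.2

theorem reverse (h : IsPathFromTo adj l a b) : IsPathFromTo (flip adj) l.reverse b a :=
  ⟨List.isChain_reverse.2 h.1, by simpa using h.2.2, by simpa using h.2.1⟩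

theorem exists_mem_adj_of_ne_last (h : IsPathFromTo adj l a b) (hx : x ∈ l) (hxb : x ≠ b) :
    ∃ y ∈ l, adj x y := by
  induction l generalizing a with
  | nil => simp at hx
  | cons z m ih =>
    obtain ⟨hc, -, hlast⟩ := h
    rcases m with _ | ⟨z', m⟩
    · simp only [List.mem_singleton, List.getLast?_singleton, Option.some.injEq] at hx hlast
      exact absurd (hx.trans hlast) hxb
    obtain ⟨hzz', hc⟩ := List.isChain_cons_cons.1 hc
    rcases List.mem_cons.1 hx with rfl | hx
    · exact ⟨z', by simp, hzz'⟩
    · obtain ⟨y, hy, hxy⟩ := ih (a := z') ⟨hc, rfl, by simpa using hlast⟩ hx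
      exact ⟨y, List.mem_cons_of_mem _ hy, hxy⟩

theorem exists_mem_adj_of_ne_head (h : IsPathFromTo adj l a b) (hx : x ∈ l) (hxa : x ≠ a) :
    ∃ y ∈ l, adj y x := by
  simpa [flip] using h.reverse.exists_mem_adj_of_ne_last (List.mem_reverse.2 hx) hxa

theorem pairwise_transGen (h : IsPathFromTo adj l a b) : l.Pairwise (Relation.TransGen adj) :=
  List.isChain_iff_pairwise.1 (h.1.imp fun _ _ => .single)

theorem nodup (hacyc : ∀ v, ¬ Relation.TransGen adj v v) (h : IsPathFromTo adj l a b) :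
    l.Nodup :=
  h.pairwise_transGen.imp fun {x _} hxy => by rintro rfl; exact hacyc x hxy

theorem mem_tail_dropLast_iff (hnd : l.Nodup) (h : IsPathFromTo adj l a b) :
    x ∈ l.tail.dropLast ↔ x ∈ l ∧ x ≠ a ∧ x ≠ b := by
  obtain ⟨-, hhead, hlast⟩ := h
  obtain ⟨m, rfl⟩ : ∃ m, l = a :: m := by
    cases l with
    | nil => simp at hhead
    | cons z m => exact ⟨m, by simpa using hhead⟩
  rcases List.eq_nil_or_concat m with rfl | ⟨m, c, rfl⟩
  · simp only [List.tail_cons, List.dropLast_nil, List.not_mem_nil, List.mem_singleton]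
    tauto
  · rw [List.concat_eq_append, ← List.cons_append, List.getLast?_concat,
      Option.some.injEq] at hlast
    subst hlast
    simp only [List.concat_eq_append, List.nodup_cons, List.nodup_append, List.mem_append,
      List.mem_singleton] at hnd
    simp only [List.concat_eq_append, List.tail_cons, List.dropLast_concat, List.mem_cons,
      List.mem_append]
    grind

end IsPathFromTo

namespace IsBinaryNetwork

variable {V : Type*} {verts : Set V} {adj : V → V → Prop} {root a b c₁ c₂ d x y : V}

theorem ne_of_adj (hN : IsBinaryNetwork verts adj root) (h : adj x y) : x ≠ y := by
  rintro rfl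
  exact hN.acyclic x (.single h)

theorem not_adj_of_isLeaf (hN : IsBinaryNetwork verts adj root) (hx : IsLeaf verts adj x) :
    ¬ adj x y := by
  have hfin : {y | adj x y}.Finite := hN.finite_verts.subset fun y hy => (hN.adj_mem hy).2
  rw [IsLeaf, outdeg, Set.ncard_eq_zero hfin] at hx
  exact fun h => hx.2.subset h

theorem eq_of_adj_of_isLeaf (hN : IsBinaryNetwork verts adj root) (hx : IsLeaf verts adj x)
    (ha : adj a x) (hb : adj b x) : a = b :=
  Set.eq_of_mem_of_ncard_eq_one (hN.leaf_indeg x hx.1 hx.2) ha hb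

theorem exists_adj_of_isLeaf (hN : IsBinaryNetwork verts adj root) (hx : IsLeaf verts adj x) :
    ∃ a, adj a x := by
  obtain ⟨a, ha⟩ := Set.ncard_eq_one.1 (hN.leaf_indeg x hx.1 hx.2)
  exact ⟨a, show a ∈ {y | adj y x} from ha ▸ rfl⟩

theorem eq_of_adj_of_adj (hN : IsBinaryNetwork verts adj root)
    (htree : ∀ x, ¬ IsReticulation adj x) (ha : adj a x) (hb : adj b x) : a = b := by
  have hx := (hN.adj_mem ha).2
  have hxr : x ≠ root := by
    rintro rfl
    have hfin : {y | adj y x}.Finite := hN.finite_verts.subset fun y hy => (hN.adj_mem hy).1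
    have hempty := (Set.ncard_eq_zero hfin).1 hN.root_indeg
    exact hempty.subset ha
  by_cases hout : outdeg adj x = 0
  · exact Set.eq_of_mem_of_ncard_eq_one (hN.leaf_indeg x hx hout) ha hb
  · obtain htv | hret := hN.internal_deg x hx hxr hout
    · exact Set.eq_of_mem_of_ncard_eq_one htv.1 ha hb
    · exact absurd hret (htree x)

theorem outdeg_eq_two (hN : IsBinaryNetwork verts adj root)
    (htree : ∀ x, ¬ IsReticulation adj x) (hx : x ∈ verts) (hnl : ¬ IsLeaf verts adj x) :
    outdeg adj x = 2 := by
  have hout : outdeg adj x ≠ 0 := fun h => hnl ⟨hx, h⟩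
  by_cases hxr : x = root
  · exact hxr ▸ hN.root_outdeg
  · obtain htv | hret := hN.internal_deg x hx hxr hout
    · exact htv.2
    · exact absurd hret (htree x)

theorem exists_adj_adj_of_not_isLeaf (hN : IsBinaryNetwork verts adj root)
    (htree : ∀ x, ¬ IsReticulation adj x) (hx : x ∈ verts) (hnl : ¬ IsLeaf verts adj x) :
    ∃ c₁ c₂, c₁ ≠ c₂ ∧ adj x c₁ ∧ adj x c₂ := by
  obtain ⟨c₁, c₂, hne, hset⟩ := Set.ncard_eq_two.1 (hN.outdeg_eq_two htree hx hnl)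
  have hc₁ : c₁ ∈ {y | adj x y} := hset ▸ Or.inl rfl
  have hc₂ : c₂ ∈ {y | adj x y} := hset ▸ Or.inr rfl
  exact ⟨c₁, c₂, hne, hc₁, hc₂⟩

theorem eq_or_eq_of_adj (hN : IsBinaryNetwork verts adj root)
    (htree : ∀ x, ¬ IsReticulation adj x) (hne : c₁ ≠ c₂) (h₁ : adj x c₁) (h₂ : adj x c₂)
    (hd : adj x d) :
    d = c₁ ∨ d = c₂ := by
  have hnl : ¬ IsLeaf verts adj x := fun hl => hN.not_adj_of_isLeaf hl h₁
  exact Set.eq_or_eq_of_ncard_eq_two (hN.outdeg_eq_two htree (hN.adj_mem h₁).1 hnl) hne h₁ h₂ hd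

end IsBinaryNetwork

section Display

variable {V : Type*}

structure IsDisplay (vertsM : Set V) (adjM : V → V → Prop) (vertsT : Set V)
    (adjT : V → V → Prop) (φ : V → V) (P : V → V → List V) : Prop where
  mapsTo : Set.MapsTo φ vertsT vertsM
  injOn : Set.InjOn φ vertsT
  map_leaf : ∀ ℓ, IsLeaf vertsT adjT ℓ → φ ℓ = ℓ
  isPath : ∀ ⦃a b⦄, adjT a b → IsPathFromTo adjM (P a b) (φ a) (φ b)
  eq_or_eq_of_image_mem : ∀ ⦃a b⦄, adjT a b → ∀ c ∈ vertsT, φ c ∈ P a b → c = a ∨ c = b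
  eq_or_eq_of_mem_of_mem : ∀ ⦃a b a' b'⦄, adjT a b → adjT a' b' → (a, b) ≠ (a', b') →
    ∀ x ∈ P a b, x ∈ P a' b' → x = φ a ∨ x = φ b

theorem displays_iff_exists_isDisplay {vertsM : Set V} {adjM : V → V → Prop} {vertsT : Set V}
    {adjT : V → V → Prop} (hM : ∀ v, ¬ Relation.TransGen adjM v v)
    (hT : ∀ ⦃a b⦄, adjT a b → a ∈ vertsT ∧ b ∈ vertsT) :
    Displays vertsM adjM vertsT adjT ↔ ∃ φ P, IsDisplay vertsM adjM vertsT adjT φ P := by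
  constructor
  · rintro ⟨φ, P, hmap, hinj, hleaf, hpath, hint, hdisj⟩
    refine ⟨φ, P, hmap, hinj, hleaf, hpath, fun a b hab c hc hmem => ?_,
      fun a b a' b' hab ha'b' hne x hx hx' => (hdisj a b a' b' hab ha'b' hne x hx hx').1⟩
    by_contra! hne
    refine hint a b hab (φ c) (((hpath a b hab).mem_tail_dropLast_iff
      ((hpath a b hab).nodup hM)).2 ⟨hmem, fun h => hne.1 ?_, fun h => hne.2 ?_⟩) ⟨c, hc, rfl⟩
    exacts [hinj hc (hT hab).1 h, hinj hc (hT hab).2 h]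
  · rintro ⟨φ, P, h⟩
    refine ⟨φ, P, h.mapsTo, h.injOn, h.map_leaf, h.isPath, ?_,
      fun a b a' b' hab ha'b' hne x hx hx' => ⟨h.eq_or_eq_of_mem_of_mem hab ha'b' hne x hx hx',
        h.eq_or_eq_of_mem_of_mem ha'b' hab hne.symm x hx' hx⟩⟩
    rintro a b hab _ hx ⟨c, hc, rfl⟩
    obtain ⟨hmem, hca, hcb⟩ := ((h.isPath hab).mem_tail_dropLast_iff ((h.isPath hab).nodup hM)).1 hx
    rcases h.eq_or_eq_of_image_mem hab c hc hmem with rfl | rfl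
    exacts [hca rfl, hcb rfl]

structure IsTreeDisplay (vertsN : Set V) (adjN : V → V → Prop) (rootN : V) (vertsT : Set V)
    (adjT : V → V → Prop) (rootT : V) (φ : V → V) (P : V → V → List V) : Prop
    extends IsDisplay vertsN adjN vertsT adjT φ P where
  network : IsBinaryNetwork vertsN adjN rootN
  tree : IsBinaryNetwork vertsT adjT rootT
  no_reticulation : ∀ x, ¬ IsReticulation adjT x
  isLeaf_of_isLeaf : ∀ x, IsLeaf vertsT adjT x → IsLeaf vertsN adjN x

namespace IsTreeDisplay

variable {vertsN : Set V} {adjN : V → V → Prop} {rootN : V} {vertsT : Set V}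
  {adjT : V → V → Prop} {rootT : V} {φ : V → V} {P : V → V → List V} {a b c x z ℓ : V}

theorem eq_of_isLeaf_of_mem (h : IsTreeDisplay vertsN adjN rootN vertsT adjT rootT φ P)
    (hab : adjT a b) (hℓ : IsLeaf vertsT adjT ℓ) (hmem : ℓ ∈ P a b) : b = ℓ := by
  rw [← h.map_leaf ℓ hℓ] at hmem
  rcases h.eq_or_eq_of_image_mem hab ℓ hℓ.1 hmem with rfl | rfl
  · exact absurd hab (h.tree.not_adj_of_isLeaf hℓ)
  · rfl

theorem exists_mem_adj_image (h : IsTreeDisplay vertsN adjN rootN vertsT adjT rootT φ P)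
    (hab : adjT a b) : ∃ y ∈ P a b, adjN (φ a) y :=
  (h.isPath hab).exists_mem_adj_of_ne_last (h.isPath hab).head_mem fun hφ =>
    h.tree.ne_of_adj hab (h.injOn (h.tree.adj_mem hab).1 (h.tree.adj_mem hab).2 hφ)

theorem not_isLeaf_of_adj (h : IsTreeDisplay vertsN adjN rootN vertsT adjT rootT φ P)
    (hc : IsLeaf vertsT adjT c) : ¬ adjN (φ c) x := by
  rw [h.map_leaf c hc]
  exact h.network.not_adj_of_isLeaf (h.isLeaf_of_isLeaf c hc)

theorem image_ne_of_forall_adj_eq (h : IsTreeDisplay vertsN adjN rootN vertsT adjT rootT φ P)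
    (hc : c ∈ vertsT) (hx : ∀ y, adjN x y ↔ y = z) : φ c ≠ x := by
  intro hφc
  have hnl : ¬ IsLeaf vertsT adjT c := fun hl => h.not_isLeaf_of_adj hl (hφc ▸ (hx z).2 rfl)
  obtain ⟨c₁, c₂, hne, h₁, h₂⟩ := h.tree.exists_adj_adj_of_not_isLeaf h.no_reticulation hc hnl
  have hmem : ∀ d, adjT c d → z ∈ P c d := fun d hd => by
    obtain ⟨y, hy, hxy⟩ := h.exists_mem_adj_image hd
    rw [hφc, hx] at hxy
    exact hxy ▸ hy
  have hzc : z ≠ φ c := (h.network.ne_of_adj (hφc ▸ (hx z).2 rfl)).symm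
  have hne' : (c, c₁) ≠ (c, c₂) := by simp [hne]
  have hz₁ := (h.eq_or_eq_of_mem_of_mem h₁ h₂ hne' z (hmem _ h₁) (hmem _ h₂)).resolve_left hzc
  have hz₂ := (h.eq_or_eq_of_mem_of_mem h₂ h₁ hne'.symm z (hmem _ h₂) (hmem _ h₁)).resolve_left hzc
  exact hne (h.injOn (h.tree.adj_mem h₁).2 (h.tree.adj_mem h₂).2 (hz₁.symm.trans hz₂))

end IsTreeDisplay

end Display

structure IsCrossedCherry {V : Type*} (adj : V → V → Prop) (w u g v e ℓ ℓ' : V) : Prop where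
  out_w : ∀ y, adj w y ↔ y = u ∨ y = g
  out_u : ∀ y, adj u y ↔ y = v ∨ y = e
  out_g : ∀ y, adj g y ↔ y = v ∨ y = e
  out_v : ∀ y, adj v y ↔ y = ℓ
  out_e : ∀ y, adj e y ↔ y = ℓ'
  in_u : ∀ y, adj y u ↔ y = w
  in_g : ∀ y, adj y g ↔ y = w
  in_v : ∀ y, adj y v ↔ y = u ∨ y = g
  in_e : ∀ y, adj y e ↔ y = u ∨ y = g
  in_ℓ : ∀ y, adj y ℓ ↔ y = v
  in_ℓ' : ∀ y, adj y ℓ' ↔ y = e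
  u_ne_g : u ≠ g
  v_ne_e : v ≠ e

namespace IsCrossedCherry

variable {V : Type*} {adj : V → V → Prop} {w u g v e ℓ ℓ' x : V}

theorem swap (h : IsCrossedCherry adj w u g v e ℓ ℓ') : IsCrossedCherry adj w g u e v ℓ' ℓ where
  out_w y := (h.out_w y).trans or_comm
  out_u y := (h.out_g y).trans or_comm
  out_g y := (h.out_u y).trans or_comm
  out_v := h.out_e
  out_e := h.out_v
  in_u := h.in_g
  in_g := h.in_u
  in_v y := (h.in_e y).trans or_comm
  in_e y := (h.in_v y).trans or_comm
  in_ℓ := h.in_ℓ'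
  in_ℓ' := h.in_ℓ
  u_ne_g := h.u_ne_g.symm
  v_ne_e := h.v_ne_e.symm

theorem transGen_of_forall_adj_iff (h : IsCrossedCherry adj w u g v e ℓ ℓ')
    (hx : ∀ y, adj x y ↔ y = v ∨ y = e) {y : V} (hy : y ∈ [v, e, ℓ, ℓ']) :
    Relation.TransGen adj x y := by
  have hxv := (hx v).2 (.inl rfl)
  have hxe := (hx e).2 (.inr rfl)
  simp only [List.mem_cons, List.not_mem_nil, or_false] at hy
  rcases hy with rfl | rfl | rfl | rfl
  exacts [.single hxv, .single hxe, .tail (.single hxv) ((h.out_v y).2 rfl),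
    .tail (.single hxe) ((h.out_e y).2 rfl)]

theorem transGen_w (h : IsCrossedCherry adj w u g v e ℓ ℓ') {y : V}
    (hy : y ∈ [u, g, v, e, ℓ, ℓ']) : Relation.TransGen adj w y := by
  rw [List.mem_cons, List.mem_cons] at hy
  rcases hy with rfl | rfl | hy
  exacts [.single ((h.out_w y).2 (.inl rfl)), .single ((h.out_w y).2 (.inr rfl)),
    .head ((h.out_w u).2 (.inl rfl)) (h.transGen_of_forall_adj_iff h.out_u hy)]

theorem reflTransGen (h : IsCrossedCherry adj w u g v e ℓ ℓ') (hx : x ∈ [w, u, g, v, e, ℓ, ℓ']) :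
    Relation.ReflTransGen adj w x := by
  rcases List.mem_cons.1 hx with rfl | hx
  exacts [.refl, (h.transGen_w hx).to_reflTransGen]

theorem nodup (h : IsCrossedCherry adj w u g v e ℓ ℓ')
    (hacyc : ∀ x, ¬ Relation.TransGen adj x x) : [w, u, g, v, e, ℓ, ℓ'].Nodup := by
  have below : ∀ {x : V} {l : List V}, (∀ y ∈ l, Relation.TransGen adj x y) → x ∉ l :=
    fun hl hx => hacyc _ (hl _ hx)
  have hu : ∀ y ∈ [v, e, ℓ, ℓ'], Relation.TransGen adj u y :=
    fun _ => h.transGen_of_forall_adj_iff h.out_u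
  have hg : ∀ y ∈ [v, e, ℓ, ℓ'], Relation.TransGen adj g y :=
    fun _ => h.transGen_of_forall_adj_iff h.out_g
  have hvℓ := (h.out_v ℓ).2 rfl
  have heℓ' := (h.out_e ℓ').2 rfl
  have hvℓ' : v ≠ ℓ' := fun hv => by
    rcases (h.in_v e).1 (hv ▸ heℓ') with rfl | rfl
    exacts [below hu (by simp), below hg (by simp)]
  have heℓ : e ≠ ℓ := fun he => by
    rcases (h.in_e v).1 (he ▸ hvℓ) with rfl | rfl
    exacts [below hu (by simp), below hg (by simp)]
  have hℓℓ' : ℓ ≠ ℓ' := fun hℓ => h.v_ne_e ((h.in_ℓ e).1 (hℓ ▸ heℓ')).symm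
  simp only [List.nodup_cons, List.mem_cons, List.not_mem_nil, List.nodup_nil, or_false, not_or,
    not_false_eq_true, and_true]
  have ne_of_adj : ∀ {x y : V}, adj x y → x ≠ y := fun hxy hx =>
    hacyc _ (hx ▸ Relation.TransGen.single hxy)
  refine ⟨?_, ⟨h.u_ne_g, ?_⟩, ?_, ⟨h.v_ne_e, ne_of_adj hvℓ, hvℓ'⟩, ⟨heℓ, ne_of_adj heℓ'⟩, hℓℓ'⟩
  · simpa using below fun _ => h.transGen_w
  · simpa using below hu
  · simpa using below hg

end IsCrossedCherry

theorem IsBinaryNetwork.isCrossedCherry {V : Type*} {verts : Set V} {adj : V → V → Prop}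
    {root w u g v e ℓ ℓ' : V} (hN : IsBinaryNetwork verts adj root)
    (hw : IsTreeVertex adj w) (hwu : adj w u) (hwg : adj w g) (hug : u ≠ g)
    (hu : IsTreeVertex adj u) (hg : IsTreeVertex adj g)
    (hv : IsReticulation adj v) (he : IsReticulation adj e) (hve : v ≠ e)
    (huv : adj u v) (hue : adj u e) (hge : adj g e) (hgv : adj g v)
    (hvl : adj v ℓ) (hl : IsLeaf verts adj ℓ) (hel : adj e ℓ') (hl' : IsLeaf verts adj ℓ') :
    IsCrossedCherry adj w u g v e ℓ ℓ' where
  out_w y := ⟨Set.eq_or_eq_of_ncard_eq_two hw.2 hug hwu hwg, by rintro (rfl | rfl) <;> assumption⟩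
  out_u y := ⟨Set.eq_or_eq_of_ncard_eq_two hu.2 hve huv hue, by rintro (rfl | rfl) <;> assumption⟩
  out_g y := ⟨Set.eq_or_eq_of_ncard_eq_two hg.2 hve hgv hge, by rintro (rfl | rfl) <;> assumption⟩
  out_v y := ⟨fun hy => Set.eq_of_mem_of_ncard_eq_one hv.2 hy hvl, by rintro rfl; exact hvl⟩
  out_e y := ⟨fun hy => Set.eq_of_mem_of_ncard_eq_one he.2 hy hel, by rintro rfl; exact hel⟩
  in_u y := ⟨fun hy => Set.eq_of_mem_of_ncard_eq_one hu.1 hy hwu, by rintro rfl; exact hwu⟩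
  in_g y := ⟨fun hy => Set.eq_of_mem_of_ncard_eq_one hg.1 hy hwg, by rintro rfl; exact hwg⟩
  in_v y := ⟨Set.eq_or_eq_of_ncard_eq_two hv.1 hug huv hgv, by rintro (rfl | rfl) <;> assumption⟩
  in_e y := ⟨Set.eq_or_eq_of_ncard_eq_two he.1 hug hue hge, by rintro (rfl | rfl) <;> assumption⟩
  in_ℓ y := ⟨fun hy => hN.eq_of_adj_of_isLeaf hl hy hvl, by rintro rfl; exact hvl⟩
  in_ℓ' y := ⟨fun hy => hN.eq_of_adj_of_isLeaf hl' hy hel, by rintro rfl; exact hel⟩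
  u_ne_g := hug
  v_ne_e := hve

def uncrossed {V : Type*} (adj : V → V → Prop) (u g v e : V) : V → V → Prop :=
  fun x y => adj x y ∧ ¬ (x = u ∧ y = e) ∧ ¬ (x = g ∧ y = v)

theorem uncrossed_comm {V : Type*} (adj : V → V → Prop) (u g v e : V) :
    uncrossed adj g u e v = uncrossed adj u g v e := by
  ext x y
  exact and_congr_right fun _ => and_comm

theorem isChain_uncrossed {V : Type*} {adj : V → V → Prop} {u g v e : V} {l : List V}
    (hl : l.IsChain adj) (hv : v ∉ l) (he : e ∉ l) : l.IsChain (uncrossed adj u g v e) :=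
  hl.imp_of_mem_imp fun _ _ _ hy hxy =>
    ⟨hxy, fun hxy' => he (hxy'.2 ▸ hy), fun hxy' => hv (hxy'.2 ▸ hy)⟩

theorem IsCrossedCherry.isPath_uncrossed {V : Type*} {adj : V → V → Prop} {w u g v e ℓ ℓ' : V}
    (h : IsCrossedCherry adj w u g v e ℓ ℓ') (hacyc : ∀ x, ¬ Relation.TransGen adj x x) :
    IsPathFromTo (uncrossed adj u g v e) [w, u, v, ℓ] w ℓ := by
  have hnd := h.nodup hacyc
  simp only [List.nodup_cons, List.mem_cons, List.not_mem_nil, or_false, not_or] at hnd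
  refine ⟨?_, rfl, rfl⟩
  show List.IsChain _ _
  simp only [List.isChain_cons_cons, List.isChain_singleton, and_true, uncrossed]
  refine ⟨⟨(h.out_w u).2 (.inl rfl), ?_, ?_⟩, ⟨(h.out_u v).2 (.inl rfl), ?_, ?_⟩,
    ⟨(h.out_v ℓ).2 rfl, ?_, ?_⟩⟩ <;> grind

theorem IsCrossedCherry.eq_of_mem_of_mem {V : Type*} {adj : V → V → Prop} {w u g v e ℓ ℓ' x : V}
    (h : IsCrossedCherry adj w u g v e ℓ ℓ') (hacyc : ∀ x, ¬ Relation.TransGen adj x x)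
    (hx : x ∈ [w, u, v, ℓ]) (hx' : x ∈ [w, g, e, ℓ']) : x = w := by
  have hnd := h.nodup hacyc
  simp only [List.nodup_cons, List.mem_cons, List.not_mem_nil, or_false, not_or] at hnd hx hx'
  grind

structure CrossedCherryDisplay {V : Type*} (vertsN : Set V) (adjN : V → V → Prop) (rootN : V)
    (vertsT : Set V) (adjT : V → V → Prop) (rootT : V) (φ : V → V) (P : V → V → List V)
    (w u g v e ℓ ℓ' : V) : Prop
    extends IsTreeDisplay vertsN adjN rootN vertsT adjT rootT φ P where
  crossedCherry : IsCrossedCherry adjN w u g v e ℓ ℓ'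
  isLeaf_left : IsLeaf vertsT adjT ℓ
  isLeaf_right : IsLeaf vertsT adjT ℓ'

namespace CrossedCherryDisplay

variable {V : Type*} {vertsN : Set V} {adjN : V → V → Prop} {rootN : V} {vertsT : Set V}
  {adjT : V → V → Prop} {rootT : V} {φ : V → V} {P : V → V → List V} {w u g v e ℓ ℓ' : V}
  {a b c p x : V}

theorem swap (h : CrossedCherryDisplay vertsN adjN rootN vertsT adjT rootT φ P w u g v e ℓ ℓ') :
    CrossedCherryDisplay vertsN adjN rootN vertsT adjT rootT φ P w g u e v ℓ' ℓ :=
  ⟨h.toIsTreeDisplay, h.crossedCherry.swap, h.isLeaf_right, h.isLeaf_left⟩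

theorem nodup (h : CrossedCherryDisplay vertsN adjN rootN vertsT adjT rootT φ P w u g v e ℓ ℓ') :
    [w, u, g, v, e, ℓ, ℓ'].Nodup :=
  h.crossedCherry.nodup h.network.acyclic

theorem eq_left_of_mem
    (h : CrossedCherryDisplay vertsN adjN rootN vertsT adjT rootT φ P w u g v e ℓ ℓ')
    (hab : adjT a b) (hx : x = v ∨ x = ℓ) (hmem : x ∈ P a b) : b = ℓ := by
  obtain rfl | rfl := hx
  · have hvb : x ≠ φ b :=
      (h.image_ne_of_forall_adj_eq (h.tree.adj_mem hab).2 h.crossedCherry.out_v).symm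
    obtain ⟨y, hy, hxy⟩ := (h.isPath hab).exists_mem_adj_of_ne_last hmem hvb
    rw [h.crossedCherry.out_v] at hxy
    exact h.eq_of_isLeaf_of_mem hab h.isLeaf_left (hxy ▸ hy)
  · exact h.eq_of_isLeaf_of_mem hab h.isLeaf_left hmem

theorem eq_or_eq_of_adj_image
    (h : CrossedCherryDisplay vertsN adjN rootN vertsT adjT rootT φ P w u g v e ℓ ℓ')
    (hab : adjT a b) (hx : ∀ y, adjN (φ a) y ↔ y = v ∨ y = e) : b = ℓ ∨ b = ℓ' := by
  obtain ⟨y, hy, hay⟩ := h.exists_mem_adj_image hab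
  rcases (hx y).1 hay with rfl | rfl
  exacts [.inl (h.eq_left_of_mem hab (.inl rfl) hy), .inr (h.swap.eq_left_of_mem hab (.inl rfl) hy)]

theorem adj_left_and_right_of_image
    (h : CrossedCherryDisplay vertsN adjN rootN vertsT adjT rootT φ P w u g v e ℓ ℓ')
    (hc : c ∈ vertsT) (hx : ∀ y, adjN (φ c) y ↔ y = v ∨ y = e) : adjT c ℓ ∧ adjT c ℓ' := by
  have hnl : ¬ IsLeaf vertsT adjT c := fun hl => h.not_isLeaf_of_adj hl ((hx v).2 (.inl rfl))
  obtain ⟨c₁, c₂, hne, h₁, h₂⟩ := h.tree.exists_adj_adj_of_not_isLeaf h.no_reticulation hc hnl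
  rcases h.eq_or_eq_of_adj_image h₁ hx with rfl | rfl <;>
    rcases h.eq_or_eq_of_adj_image h₂ hx with rfl | rfl
  exacts [absurd rfl hne, ⟨h₁, h₂⟩, ⟨h₂, h₁⟩, absurd rfl hne]

theorem eq_of_image_eq_u_or_g
    (h : CrossedCherryDisplay vertsN adjN rootN vertsT adjT rootT φ P w u g v e ℓ ℓ')
    (hp : adjT p ℓ) (hc : c ∈ vertsT) (hφc : φ c = u ∨ φ c = g) : c = p := by
  have hx : ∀ y, adjN (φ c) y ↔ y = v ∨ y = e := by
    rcases hφc with hφc | hφc <;> rw [hφc]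
    exacts [h.crossedCherry.out_u, h.crossedCherry.out_g]
  exact h.tree.eq_of_adj_of_adj h.no_reticulation (h.adj_left_and_right_of_image hc hx).1 hp

theorem image_eq_u_or_g_or_w_mem
    (h : CrossedCherryDisplay vertsN adjN rootN vertsT adjT rootT φ P w u g v e ℓ ℓ')
    (hp : adjT p ℓ) : φ p = u ∨ φ p = g ∨ w ∈ P p ℓ := by
  have hpath := h.isPath hp
  rw [h.map_leaf ℓ h.isLeaf_left] at hpath
  have hpT := (h.tree.adj_mem hp).1
  have hℓp : ℓ ≠ φ p := fun hℓ => h.tree.ne_of_adj hp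
    (h.injOn hpT h.isLeaf_left.1 (hℓ.symm.trans (h.map_leaf ℓ h.isLeaf_left).symm))
  obtain ⟨y, hy, hyℓ⟩ := hpath.exists_mem_adj_of_ne_head hpath.last_mem hℓp
  rw [h.crossedCherry.in_ℓ] at hyℓ
  subst hyℓ
  obtain ⟨x, hx, hxy⟩ := hpath.exists_mem_adj_of_ne_head hy
    (h.image_ne_of_forall_adj_eq hpT h.crossedCherry.out_v).symm
  rw [h.crossedCherry.in_v] at hxy
  by_cases hxp : x = φ p
  · rcases hxy with rfl | rfl
    exacts [.inl hxp.symm, .inr (.inl hxp.symm)]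
  obtain ⟨z, hz, hzx⟩ := hpath.exists_mem_adj_of_ne_head hx hxp
  rcases hxy with rfl | rfl
  · exact .inr (.inr ((h.crossedCherry.in_u z).1 hzx ▸ hz))
  · exact .inr (.inr ((h.crossedCherry.in_g z).1 hzx ▸ hz))

theorem eq_image_of_w_mem
    (h : CrossedCherryDisplay vertsN adjN rootN vertsT adjT rootT φ P w u g v e ℓ ℓ')
    {p' : V} (hp : adjT p ℓ) (hp' : adjT p' ℓ') (hw : w ∈ P p ℓ) (hw' : w ∈ P p' ℓ') :
    w = φ p := by
  have hnd := h.nodup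
  simp only [List.nodup_cons, List.mem_cons, List.not_mem_nil] at hnd
  have hne : (p, ℓ) ≠ (p', ℓ') := fun hpp => by simp_all
  rcases h.eq_or_eq_of_mem_of_mem hp hp' hne w hw hw' with hwp | hwℓ
  · exact hwp
  · rw [h.map_leaf ℓ h.isLeaf_left] at hwℓ
    simp_all

theorem adj_right_of_adj_left
    (h : CrossedCherryDisplay vertsN adjN rootN vertsT adjT rootT φ P w u g v e ℓ ℓ')
    (hp : adjT p ℓ) : adjT p ℓ' := by
  obtain ⟨p', hp'⟩ := h.tree.exists_adj_of_isLeaf h.isLeaf_right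
  suffices p' = p from this ▸ hp'
  have hpT := (h.tree.adj_mem hp).1
  have hp'T := (h.tree.adj_mem hp').1
  rcases h.image_eq_u_or_g_or_w_mem hp with hφp | hφp | hw
  · exact (h.swap.eq_of_image_eq_u_or_g hp' hpT (.inr hφp)).symm
  · exact (h.swap.eq_of_image_eq_u_or_g hp' hpT (.inl hφp)).symm
  rcases h.swap.image_eq_u_or_g_or_w_mem hp' with hφp' | hφp' | hw'
  · exact h.eq_of_image_eq_u_or_g hp hp'T (.inr hφp')
  · exact h.eq_of_image_eq_u_or_g hp hp'T (.inl hφp')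
  · exact h.injOn hp'T hpT
      ((h.swap.eq_image_of_w_mem hp' hp hw' hw).symm.trans (h.eq_image_of_w_mem hp hp' hw hw'))

theorem image_eq_w_or_u_or_g
    (h : CrossedCherryDisplay vertsN adjN rootN vertsT adjT rootT φ P w u g v e ℓ ℓ')
    (hp : adjT p ℓ) : φ p = w ∨ φ p = u ∨ φ p = g := by
  have hp' := h.adj_right_of_adj_left hp
  rcases h.image_eq_u_or_g_or_w_mem hp with hφp | hφp | hw
  · exact .inr (.inl hφp)
  · exact .inr (.inr hφp)
  rcases h.swap.image_eq_u_or_g_or_w_mem hp' with hφp | hφp | hw'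
  · exact .inr (.inr hφp)
  · exact .inr (.inl hφp)
  · exact .inl (h.eq_image_of_w_mem hp hp' hw hw').symm

theorem left_ne_right
    (h : CrossedCherryDisplay vertsN adjN rootN vertsT adjT rootT φ P w u g v e ℓ ℓ') : ℓ ≠ ℓ' :=
  fun hℓ => by simpa [hℓ] using h.nodup

theorem eq_or_eq_of_adj
    (h : CrossedCherryDisplay vertsN adjN rootN vertsT adjT rootT φ P w u g v e ℓ ℓ')
    (hp : adjT p ℓ) (hb : adjT p b) : b = ℓ ∨ b = ℓ' :=
  h.tree.eq_or_eq_of_adj h.no_reticulation h.left_ne_right hp (h.adj_right_of_adj_left hp) hb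

theorem eq_of_image_eq_w
    (h : CrossedCherryDisplay vertsN adjN rootN vertsT adjT rootT φ P w u g v e ℓ ℓ')
    (hp : adjT p ℓ) (hc : c ∈ vertsT) (hφc : φ c = w) : c = p := by
  have hnl : ¬ IsLeaf vertsT adjT c := fun hl =>
    h.not_isLeaf_of_adj hl (hφc ▸ (h.crossedCherry.out_w u).2 (.inl rfl))
  obtain ⟨c₁, c₂, hne, h₁, h₂⟩ := h.tree.exists_adj_adj_of_not_isLeaf h.no_reticulation hc hnl
  have hchild : ∀ d, adjT c d → d = p ∨ c = p := fun d hd => by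
    obtain ⟨y, hy, hwy⟩ := h.exists_mem_adj_image hd
    rw [hφc] at hwy
    have hfork : y = u ∨ y = g := (h.crossedCherry.out_w y).1 hwy
    have hxy : ∀ z, adjN y z ↔ z = v ∨ z = e := by
      rcases hfork with rfl | rfl
      exacts [h.crossedCherry.out_u, h.crossedCherry.out_g]
    by_cases hyd : y = φ d
    · exact .inl (h.eq_of_image_eq_u_or_g hp (h.tree.adj_mem hd).2 (hyd ▸ hfork))
    obtain ⟨z, hz, hyz⟩ := (h.isPath hd).exists_mem_adj_of_ne_last hy hyd
    right
    rcases (hxy z).1 hyz with rfl | rfl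
    · exact h.tree.eq_of_adj_of_adj h.no_reticulation
        (h.eq_left_of_mem hd (.inl rfl) hz ▸ hd) hp
    · exact h.tree.eq_of_adj_of_adj h.no_reticulation
        (h.swap.eq_left_of_mem hd (.inl rfl) hz ▸ hd) (h.adj_right_of_adj_left hp)
  rcases hchild c₁ h₁ with rfl | hcp
  · exact (hchild c₂ h₂).resolve_left (Ne.symm hne)
  · exact hcp

theorem eq_or_eq_of_mem
    (h : CrossedCherryDisplay vertsN adjN rootN vertsT adjT rootT φ P w u g v e ℓ ℓ')
    (hp : adjT p ℓ) (hab : adjT a b) (hx : x ∈ [w, u, g, v, e, ℓ, ℓ']) (hmem : x ∈ P a b) :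
    a = p ∨ b = p := by
  have hbT := (h.tree.adj_mem hab).2
  have hleft : ∀ y, (y = v ∨ y = ℓ) → y ∈ P a b → a = p := fun y hy hy' =>
    h.tree.eq_of_adj_of_adj h.no_reticulation (h.eq_left_of_mem hab hy hy' ▸ hab) hp
  have hright : ∀ y, (y = e ∨ y = ℓ') → y ∈ P a b → a = p := fun y hy hy' =>
    h.tree.eq_of_adj_of_adj h.no_reticulation (h.swap.eq_left_of_mem hab hy hy' ▸ hab)
      (h.adj_right_of_adj_left hp)
  have hfork : ∀ y, (y = u ∨ y = g) → y ∈ P a b → a = p ∨ b = p := fun y hy hy' => by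
    by_cases hyb : y = φ b
    · exact .inr (h.eq_of_image_eq_u_or_g hp hbT (hyb ▸ hy))
    obtain ⟨z, hz, hyz⟩ := (h.isPath hab).exists_mem_adj_of_ne_last hy' hyb
    have hz' : z = v ∨ z = e := by
      rcases hy with rfl | rfl
      exacts [(h.crossedCherry.out_u z).1 hyz, (h.crossedCherry.out_g z).1 hyz]
    rcases hz' with rfl | rfl
    exacts [.inl (hleft z (.inl rfl) hz), .inl (hright z (.inl rfl) hz)]
  simp only [List.mem_cons, List.not_mem_nil, or_false] at hx
  rcases hx with rfl | rfl | rfl | rfl | rfl | rfl | rfl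
  · by_cases hxb : x = φ b
    · exact .inr (h.eq_of_image_eq_w hp hbT hxb.symm)
    obtain ⟨z, hz, hxz⟩ := (h.isPath hab).exists_mem_adj_of_ne_last hmem hxb
    exact hfork z ((h.crossedCherry.out_w z).1 hxz) hz
  · exact hfork x (.inl rfl) hmem
  · exact hfork x (.inr rfl) hmem
  · exact .inl (hleft x (.inl rfl) hmem)
  · exact .inl (hright x (.inl rfl) hmem)
  · exact .inl (hleft x (.inr rfl) hmem)
  · exact .inl (hright x (.inr rfl) hmem)

theorem exists_eq_append
    (h : CrossedCherryDisplay vertsN adjN rootN vertsT adjT rootT φ P w u g v e ℓ ℓ')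
    (hp : adjT p ℓ) (hap : adjT a p) :
    ∃ s t, P a p = s ++ w :: t ∧ ∀ x ∈ s, x ∉ [w, u, g, v, e, ℓ, ℓ'] := by
  have hpath := h.isPath hap
  have hw : w ∈ P a p := by
    rcases h.image_eq_w_or_u_or_g hp with hφp | hφp | hφp
    · exact hφp ▸ hpath.last_mem
    all_goals
      have hne : φ p ≠ φ a := fun hφ => h.tree.ne_of_adj hap
        (h.injOn (h.tree.adj_mem hap).1 (h.tree.adj_mem hap).2 hφ.symm)
      obtain ⟨y, hy, hyp⟩ := hpath.exists_mem_adj_of_ne_head hpath.last_mem hne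
      rw [hφp] at hyp
    · exact (h.crossedCherry.in_u y).1 hyp ▸ hy
    · exact (h.crossedCherry.in_g y).1 hyp ▸ hy
  obtain ⟨s, t, hst⟩ := List.append_of_mem hw
  -- every vertex of the configuration is reachable from `w`, so none of them precedes `w`
  refine ⟨s, t, hst, fun x hx hxG => h.network.acyclic x ?_⟩
  have hpair := hpath.pairwise_transGen
  rw [hst, List.pairwise_append] at hpair
  exact (hpair.2.2 x hx w List.mem_cons_self).trans_left (h.crossedCherry.reflTransGen hxG)

section Reroute

variable [DecidableEq V]

def reroutedPaths (P : V → V → List V) (p w u g v e ℓ ℓ' : V) (a b : V) : List V :=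
  if a = p then if b = ℓ then [w, u, v, ℓ] else [w, g, e, ℓ']
  else if b = p then (P a b).takeWhile (· ≠ w) ++ [w] else P a b

theorem reroutedPaths_left :
    reroutedPaths P p w u g v e ℓ ℓ' p ℓ = [w, u, v, ℓ] := by
  simp [reroutedPaths]

theorem reroutedPaths_right (hℓ : ℓ' ≠ ℓ) :
    reroutedPaths P p w u g v e ℓ ℓ' p ℓ' = [w, g, e, ℓ'] := by
  simp [reroutedPaths, hℓ]

theorem reroutedPaths_into
    (h : CrossedCherryDisplay vertsN adjN rootN vertsT adjT rootT φ P w u g v e ℓ ℓ')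
    (hp : adjT p ℓ) (hap : adjT a p) :
    ∃ s t, P a p = s ++ w :: t ∧ reroutedPaths P p w u g v e ℓ ℓ' a p = s ++ [w] ∧
      ∀ x ∈ s, x ∉ [w, u, g, v, e, ℓ, ℓ'] := by
  obtain ⟨s, t, hst, hs⟩ := h.exists_eq_append hp hap
  refine ⟨s, t, hst, ?_, hs⟩
  have hsw : ∀ x ∈ s, decide (x ≠ w) = true := fun x hx => by
    simpa using fun hxw => hs x hx (by simp [hxw])
  rw [reroutedPaths, if_neg (h.tree.ne_of_adj hap), if_pos rfl, hst,
    List.takeWhile_append_of_pos hsw]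
  simp

theorem eq_or_eq_of_mem_reroutedPaths
    (h : CrossedCherryDisplay vertsN adjN rootN vertsT adjT rootT φ P w u g v e ℓ ℓ')
    (hp : adjT p ℓ) (hab : adjT a b) (hmem : x ∈ reroutedPaths P p w u g v e ℓ ℓ' a b)
    (hx : x ∈ [w, u, g, v, e, ℓ, ℓ']) : a = p ∨ (b = p ∧ x = w) := by
  by_cases ha : a = p
  · exact .inl ha
  by_cases hb : b = p
  · subst hb
    obtain ⟨s, t, -, hP', hs⟩ := h.reroutedPaths_into hp hab
    rw [hP', List.mem_append, List.mem_singleton] at hmem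
    exact .inr ⟨rfl, hmem.resolve_left fun hxs => hs x hxs hx⟩
  · simp only [reroutedPaths, ha, hb, if_false] at hmem
    exact (h.eq_or_eq_of_mem hp hab hx hmem).elim (absurd · ha) (absurd · hb)

theorem mem_of_mem_reroutedPaths
    (h : CrossedCherryDisplay vertsN adjN rootN vertsT adjT rootT φ P w u g v e ℓ ℓ')
    (hp : adjT p ℓ) (hab : adjT a b) (hmem : x ∈ reroutedPaths P p w u g v e ℓ ℓ' a b)
    (hx : x ∉ [w, u, g, v, e, ℓ, ℓ']) : a ≠ p ∧ x ∈ P a b := by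
  by_cases ha : a = p
  · simp only [reroutedPaths, ha, if_true] at hmem
    split_ifs at hmem <;> simp_all
  refine ⟨ha, ?_⟩
  by_cases hb : b = p
  · subst hb
    obtain ⟨s, t, hst, hP', -⟩ := h.reroutedPaths_into hp hab
    rw [hP', List.mem_append, List.mem_singleton] at hmem
    rw [hst]
    rcases hmem with hxs | rfl
    · exact List.mem_append_left _ hxs
    · simp at hx
  · simpa [reroutedPaths, ha, hb] using hmem

theorem injOn_update
    (h : CrossedCherryDisplay vertsN adjN rootN vertsT adjT rootT φ P w u g v e ℓ ℓ')
    (hp : adjT p ℓ) : Set.InjOn (Function.update φ p w) vertsT := by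
  intro c hc d hd hcd
  by_cases hcp : c = p <;> by_cases hdp : d = p
  · rw [hcp, hdp]
  · rw [hcp, Function.update_self, Function.update_of_ne hdp] at hcd
    exact absurd (h.eq_of_image_eq_w hp hd hcd.symm) hdp
  · rw [hdp, Function.update_self, Function.update_of_ne hcp] at hcd
    exact absurd (h.eq_of_image_eq_w hp hc hcd) hcp
  · rw [Function.update_of_ne hcp, Function.update_of_ne hdp] at hcd
    exact h.injOn hc hd hcd

theorem update_notMem
    (h : CrossedCherryDisplay vertsN adjN rootN vertsT adjT rootT φ P w u g v e ℓ ℓ')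
    (hp : adjT p ℓ) (hc : c ∈ vertsT) : Function.update φ p w c ∉ [u, g, v, e] := by
  by_cases hcp : c = p
  · have hnd := h.nodup
    simp only [List.nodup_cons, List.mem_cons, List.not_mem_nil, or_false] at hnd
    simp only [hcp, Function.update_self, List.mem_cons, List.not_mem_nil, or_false]
    tauto
  · simp only [Function.update_of_ne hcp, List.mem_cons, List.not_mem_nil, or_false, not_or]
    exact ⟨fun hφc => hcp (h.eq_of_image_eq_u_or_g hp hc (.inl hφc)),
      fun hφc => hcp (h.eq_of_image_eq_u_or_g hp hc (.inr hφc)),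
      h.image_ne_of_forall_adj_eq hc h.crossedCherry.out_v,
      h.image_ne_of_forall_adj_eq hc h.crossedCherry.out_e⟩

theorem isPath_reroutedPaths
    (h : CrossedCherryDisplay vertsN adjN rootN vertsT adjT rootT φ P w u g v e ℓ ℓ')
    (hp : adjT p ℓ) (hab : adjT a b) :
    IsPathFromTo (uncrossed adjN u g v e) (reroutedPaths P p w u g v e ℓ ℓ' a b)
      (Function.update φ p w a) (Function.update φ p w b) := by
  by_cases ha : a = p
  · subst ha
    rcases h.eq_or_eq_of_adj hp hab with rfl | rfl
    · rw [reroutedPaths_left, Function.update_self,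
        Function.update_of_ne (h.tree.ne_of_adj hp).symm, h.map_leaf _ h.isLeaf_left]
      exact h.crossedCherry.isPath_uncrossed h.network.acyclic
    · rw [reroutedPaths_right h.left_ne_right.symm, Function.update_self,
        Function.update_of_ne (h.tree.ne_of_adj hab).symm, h.map_leaf _ h.isLeaf_right,
        ← uncrossed_comm]
      exact h.crossedCherry.swap.isPath_uncrossed h.network.acyclic
  rw [Function.update_of_ne ha]
  have hpath := h.isPath hab
  by_cases hb : b = p
  · subst hb
    obtain ⟨s, t, hst, hP', hs⟩ := h.reroutedPaths_into hp hab
    rw [hst] at hpath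
    rw [hP', Function.update_self]
    have hnd := h.nodup
    simp only [List.nodup_cons, List.mem_cons, List.not_mem_nil, or_false, not_or] at hnd
    refine ⟨isChain_uncrossed (List.IsChain.prefix hpath.1 ⟨t, by simp⟩) ?_ ?_, ?_, by simp⟩
    · simp only [List.mem_append, List.mem_singleton, not_or]
      exact ⟨fun hv => hs v hv (by simp), Ne.symm hnd.1.2.2.1⟩
    · simp only [List.mem_append, List.mem_singleton, not_or]
      exact ⟨fun he => hs e he (by simp), Ne.symm hnd.1.2.2.2.1⟩
    · rw [← hpath.2.1]
      cases s <;> rfl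
  · rw [Function.update_of_ne hb]
    simp only [reroutedPaths, ha, hb, if_false]
    have hnotMem : ∀ x ∈ [w, u, g, v, e, ℓ, ℓ'], x ∉ P a b := fun x hx hmem =>
      (h.eq_or_eq_of_mem hp hab hx hmem).elim ha hb
    exact ⟨isChain_uncrossed hpath.1 (hnotMem v (by simp)) (hnotMem e (by simp)), hpath.2⟩

theorem eq_or_eq_of_image_mem_reroutedPaths
    (h : CrossedCherryDisplay vertsN adjN rootN vertsT adjT rootT φ P w u g v e ℓ ℓ')
    (hp : adjT p ℓ) (hab : adjT a b) (hc : c ∈ vertsT)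
    (hmem : Function.update φ p w c ∈ reroutedPaths P p w u g v e ℓ ℓ' a b) : c = a ∨ c = b := by
  have hinj := h.injOn_update hp
  have hpT := (h.tree.adj_mem hp).1
  have hφp : Function.update φ p w p = w := Function.update_self ..
  by_cases ha : a = p
  · subst ha
    have hbT := (h.tree.adj_mem hab).2
    have hφb : Function.update φ a w b = b := by
      rw [Function.update_of_ne (h.tree.ne_of_adj hab).symm]
      rcases h.eq_or_eq_of_adj hp hab with rfl | rfl
      exacts [h.map_leaf _ h.isLeaf_left, h.map_leaf _ h.isLeaf_right]
    have hc' := h.update_notMem hp hc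
    have hmem' : Function.update φ a w c = w ∨ Function.update φ a w c = b := by
      rcases h.eq_or_eq_of_adj hp hab with rfl | rfl
      · rw [reroutedPaths_left] at hmem
        simp only [List.mem_cons, List.not_mem_nil, or_false] at hmem hc'
        tauto
      · rw [reroutedPaths_right h.left_ne_right.symm] at hmem
        simp only [List.mem_cons, List.not_mem_nil, or_false] at hmem hc'
        tauto
    rcases hmem' with hw | hb
    exacts [.inl (hinj hc hpT (hw.trans hφp.symm)), .inr (hinj hc hbT (hb.trans hφb.symm))]
  by_cases hG : Function.update φ p w c ∈ [w, u, g, v, e, ℓ, ℓ']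
  · obtain ha' | ⟨rfl, hw⟩ := h.eq_or_eq_of_mem_reroutedPaths hp hab hmem hG
    exacts [absurd ha' ha, .inr (hinj hc hpT (hw.trans hφp.symm))]
  · have hcp : c ≠ p := fun hcp => hG (by simp [hcp])
    obtain ⟨-, hmem'⟩ := h.mem_of_mem_reroutedPaths hp hab hmem hG
    rw [Function.update_of_ne hcp] at hmem'
    exact h.eq_or_eq_of_image_mem hab c hc hmem'

theorem eq_or_eq_of_mem_of_mem_reroutedPaths
    (h : CrossedCherryDisplay vertsN adjN rootN vertsT adjT rootT φ P w u g v e ℓ ℓ')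
    {a' b' : V} (hp : adjT p ℓ) (hab : adjT a b) (ha'b' : adjT a' b') (hne : (a, b) ≠ (a', b'))
    (hx : x ∈ reroutedPaths P p w u g v e ℓ ℓ' a b)
    (hx' : x ∈ reroutedPaths P p w u g v e ℓ ℓ' a' b') :
    x = Function.update φ p w a ∨ x = Function.update φ p w b := by
  by_cases hG : x ∈ [w, u, g, v, e, ℓ, ℓ']
  · rcases h.eq_or_eq_of_mem_reroutedPaths hp hab hx hG with rfl | ⟨rfl, rfl⟩
    · left
      rw [Function.update_self]
      by_contra hxw
      obtain rfl | ⟨-, hxw'⟩ := h.eq_or_eq_of_mem_reroutedPaths hp ha'b' hx' hG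
      · have hbb' : b ≠ b' := fun hbb' => hne (hbb' ▸ rfl)
        have hAB := h.crossedCherry.eq_of_mem_of_mem h.network.acyclic (x := x)
        have hℓ := h.left_ne_right.symm
        rcases h.eq_or_eq_of_adj hp hab with rfl | rfl <;>
          rcases h.eq_or_eq_of_adj hp ha'b' with rfl | rfl <;>
          simp only [reroutedPaths_left, reroutedPaths_right hℓ] at hx hx'
        exacts [hbb' rfl, hxw (hAB hx hx'), hxw (hAB hx' hx), hbb' rfl]
      · exact hxw hxw'
    · exact .inr (by rw [Function.update_self])
  · obtain ⟨ha, hmem⟩ := h.mem_of_mem_reroutedPaths hp hab hx hG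
    obtain ⟨-, hmem'⟩ := h.mem_of_mem_reroutedPaths hp ha'b' hx' hG
    rw [Function.update_of_ne ha]
    refine (h.eq_or_eq_of_mem_of_mem hab ha'b' hne x hmem hmem').imp id fun hxb => ?_
    have hb : b ≠ p := by
      rintro rfl
      rcases h.image_eq_w_or_u_or_g hp with hφp | hφp | hφp <;> simp [hxb, hφp] at hG
    rwa [Function.update_of_ne hb]

theorem isDisplay_reroutedPaths
    (h : CrossedCherryDisplay vertsN adjN rootN vertsT adjT rootT φ P w u g v e ℓ ℓ')
    (hp : adjT p ℓ) :
    IsDisplay vertsN (uncrossed adjN u g v e) vertsT adjT (Function.update φ p w)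
      (reroutedPaths P p w u g v e ℓ ℓ') where
  mapsTo c hc := by
    by_cases hcp : c = p
    · rw [hcp, Function.update_self]
      exact (h.network.adj_mem ((h.crossedCherry.out_w u).2 (.inl rfl))).1
    · rw [Function.update_of_ne hcp]
      exact h.mapsTo hc
  injOn := h.injOn_update hp
  map_leaf c hc := by
    have hcp : c ≠ p := fun hcp => h.tree.not_adj_of_isLeaf hc (hcp ▸ hp)
    rw [Function.update_of_ne hcp, h.map_leaf c hc]
  isPath _ _ hab := h.isPath_reroutedPaths hp hab
  eq_or_eq_of_image_mem _ _ hab c hc hmem := h.eq_or_eq_of_image_mem_reroutedPaths hp hab hc hmem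
  eq_or_eq_of_mem_of_mem _ _ _ _ hab ha'b' hne x hx hx' :=
    h.eq_or_eq_of_mem_of_mem_reroutedPaths hp hab ha'b' hne hx hx'

end Reroute

end CrossedCherryDisplay

theorem tcp_case_E_general {V : Type*}
    (vertsN : Set V) (adjN : V → V → Prop) (rootN : V)
    (vertsT : Set V) (adjT : V → V → Prop) (rootT : V)
    (hN : IsBinaryNetwork vertsN adjN rootN)
    (hT : IsBinaryNetwork vertsT adjT rootT)
    (hTtree : ∀ x : V, ¬ IsReticulation adjT x)
    (hleaves : {x : V | IsLeaf vertsT adjT x} = {x : V | IsLeaf vertsN adjN x})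
    (w u g v e ℓ ℓ' : V)
    (hw : IsTreeVertex adjN w) (hwu : adjN w u) (hwg : adjN w g) (hug : u ≠ g)
    (hu : IsTreeVertex adjN u) (hg : IsTreeVertex adjN g)
    (hv : IsReticulation adjN v) (he : IsReticulation adjN e) (hve : v ≠ e)
    (huv : adjN u v) (hue : adjN u e) (hge : adjN g e) (hgv : adjN g v)
    (hvl : adjN v ℓ) (hl : IsLeaf vertsN adjN ℓ)
    (hel : adjN e ℓ') (hl' : IsLeaf vertsN adjN ℓ')
    (hdisp : Displays vertsN adjN vertsT adjT) :
    Displays vertsN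
      (fun x y => adjN x y ∧ ¬ (x = u ∧ y = e) ∧ ¬ (x = g ∧ y = v))
      vertsT adjT := by
  classical
  have hleaf : ∀ x, IsLeaf vertsT adjT x ↔ IsLeaf vertsN adjN x := fun x => Set.ext_iff.1 hleaves x
  obtain ⟨φ, P, hD⟩ := (displays_iff_exists_isDisplay hN.acyclic hT.adj_mem).1 hdisp
  have h : CrossedCherryDisplay vertsN adjN rootN vertsT adjT rootT φ P w u g v e ℓ ℓ' :=
    ⟨⟨hD, hN, hT, hTtree, fun x => (hleaf x).1⟩,
      hN.isCrossedCherry hw hwu hwg hug hu hg hv he hve huv hue hge hgv hvl hl hel hl',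
      (hleaf ℓ).2 hl, (hleaf ℓ').2 hl'⟩
  obtain ⟨p, hp⟩ := hT.exists_adj_of_isLeaf h.isLeaf_left
  have hacyc : ∀ x, ¬ Relation.TransGen (uncrossed adjN u g v e) x x := fun x hx =>
    hN.acyclic x (Relation.TransGen.mono (fun _ _ hxy => hxy.1) x x hx)
  exact (displays_iff_exists_isDisplay hacyc hT.adj_mem).2 ⟨_, _, h.isDisplay_reroutedPaths hp⟩

/-- Theorem 3(iii): with `w` a tree vertex whose children `u, g` are tree
vertices, reticulations `v, e` such that the children of `u` and of `g` are
`v` and `e`, the child of `v` the leaf `ℓ` and the child of `e` the leaf `ℓ'`,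
if `N` displays `T` then the network obtained by deleting the edges `(u, e)`
and `(g, v)` displays `T`. -/
theorem tcp_case_E {V : Type*}
    (vertsN : Set V) (adjN : V → V → Prop) (rootN : V)
    (vertsT : Set V) (adjT : V → V → Prop) (rootT : V)
    (hN : IsBinaryNetwork vertsN adjN rootN)
    (hNS : NearlyStable vertsN adjN rootN)
    (hT : IsBinaryNetwork vertsT adjT rootT)
    (hTtree : ∀ x : V, ¬ IsReticulation adjT x)
    (hleaves : {x : V | IsLeaf vertsT adjT x} = {x : V | IsLeaf vertsN adjN x})
    (w u g v e ℓ ℓ' : V)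
    (hw : IsTreeVertex adjN w) (hwu : adjN w u) (hwg : adjN w g) (hug : u ≠ g)
    (hu : IsTreeVertex adjN u) (hg : IsTreeVertex adjN g)
    (hv : IsReticulation adjN v) (he : IsReticulation adjN e) (hve : v ≠ e)
    (huv : adjN u v) (hue : adjN u e) (hge : adjN g e) (hgv : adjN g v)
    (hvl : adjN v ℓ) (hl : IsLeaf vertsN adjN ℓ)
    (hel : adjN e ℓ') (hl' : IsLeaf vertsN adjN ℓ')
    (hdisp : Displays vertsN adjN vertsT adjT) :
    Displays vertsN
      (fun x y => adjN x y ∧ ¬ (x = u ∧ y = e) ∧ ¬ (x = g ∧ y = v))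
      vertsT adjT :=
  tcp_case_E_general vertsN adjN rootN vertsT adjT rootT hN hT hTtree hleaves w u g v e ℓ ℓ' hw hwu
    hwg hug hu hg hv he hve huv hue hge hgv hvl hl hel hl' hdisp
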